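/- arXiv:2109.10979 — 2 statements merged into one kernel-verified Lean document; each statement's English description precedes it below -/
import Mathlib

section
/- For three points z_1, z_2, z_3 in the upper half-plane, one has (X(z_1)×X(z_2)) × (X(z_2)×X(z_3)) = α(z_1,z_2,z_3)·X(z_2), where α(z_1,z_2,z_3) = [x_1(|z_2|²−|z_3|²) + x_2(|z_3|²−|z_1|²) + x_3(|z_1|²−|z_2|²)] / (2 y_1 y_2 y_3). -/
open Matrix

noncomputable def e1 : Matrix (Fin 2) (Fin 2) ℝ := !![0, 1; -1, 0]
noncomputable def e2 : Matrix (Fin 2) (Fin 2) ℝ := !![1, 0; 0, -1]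
noncomputable def e3 : Matrix (Fin 2) (Fin 2) ℝ := !![0, -1; -1, 0]

/-- Coordinates of a traceless matrix w.r.t. the basis `e1, e2, e3`. -/
noncomputable def coords (M : Matrix (Fin 2) (Fin 2) ℝ) : ℝ × ℝ × ℝ :=
  ((M 0 1 - M 1 0) / 2, M 0 0, -(M 0 1 + M 1 0) / 2)

/-- The hyperbolic cross product in `e`-coordinates. -/
def hcross (u v : ℝ × ℝ × ℝ) : ℝ × ℝ × ℝ :=
  (u.2.1 * v.2.2 - u.2.2 * v.2.1, u.1 * v.2.2 - u.2.2 * v.1,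
    -(u.1 * v.2.1 - u.2.1 * v.1))

/-- The hyperbolic cross product on traceless `2×2` matrices. -/
noncomputable def matCross (A B : Matrix (Fin 2) (Fin 2) ℝ) :
    Matrix (Fin 2) (Fin 2) ℝ :=
  (hcross (coords A) (coords B)).1 • e1 + (hcross (coords A) (coords B)).2.1 • e2 +
    (hcross (coords A) (coords B)).2.2 • e3

/-- `X(z) = y⁻¹ · [[−x, |z|²],[−1, x]]` for `z = x + iy`. -/
noncomputable def Xz (x y : ℝ) : Matrix (Fin 2) (Fin 2) ℝ :=
  y⁻¹ • !![-x, x ^ 2 + y ^ 2; -1, x]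

/-- The invariant `α(z₁,z₂,z₃)`. -/
noncomputable def alphaFn (x1 y1 x2 y2 x3 y3 : ℝ) : ℝ :=
  (x1 * ((x2 ^ 2 + y2 ^ 2) - (x3 ^ 2 + y3 ^ 2)) +
   x2 * ((x3 ^ 2 + y3 ^ 2) - (x1 ^ 2 + y1 ^ 2)) +
   x3 * ((x1 ^ 2 + y1 ^ 2) - (x2 ^ 2 + y2 ^ 2))) / (2 * y1 * y2 * y3)

lemma matCross_eq (A B : Matrix (Fin 2) (Fin 2) ℝ) :
    matCross A B = !![(hcross (coords A) (coords B)).2.1,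
      (hcross (coords A) (coords B)).1 - (hcross (coords A) (coords B)).2.2;
      -(hcross (coords A) (coords B)).1 - (hcross (coords A) (coords B)).2.2,
      -(hcross (coords A) (coords B)).2.1] := by
  set u := hcross (coords A) (coords B) with hu
  unfold matCross e1 e2 e3
  rw [← hu]
  ext i j
  fin_cases i <;> fin_cases j <;>
    simp [Matrix.add_apply, Matrix.smul_apply] <;> ring

lemma coords_matCross (A B : Matrix (Fin 2) (Fin 2) ℝ) :
    coords (matCross A B) = hcross (coords A) (coords B) := by
  rw [matCross_eq]
  set u := hcross (coords A) (coords B) with hu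
  unfold coords
  simp only [Matrix.cons_val', Matrix.cons_val_zero, Matrix.cons_val_one, Matrix.head_cons,
    Matrix.empty_val', Matrix.cons_val_fin_one, Matrix.head_fin_const, Matrix.of_apply]
  refine Prod.ext (by ring) (Prod.ext rfl (by ring))

lemma coords_Xz (x y : ℝ) (hy : y ≠ 0) :
    coords (Xz x y) = ((x ^ 2 + y ^ 2 + 1) / (2 * y), -x / y,
      (1 - (x ^ 2 + y ^ 2)) / (2 * y)) := by
  unfold coords Xz
  simp only [Matrix.smul_apply, Matrix.cons_val', Matrix.cons_val_zero, Matrix.cons_val_one,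
    Matrix.head_cons, Matrix.empty_val', Matrix.cons_val_fin_one, Matrix.head_fin_const,
    smul_eq_mul, Prod.mk.injEq, Matrix.of_apply]
  refine ⟨?_, inv_mul_eq_div y (-x), ?_⟩ <;>
    (field_simp; first | ring1 | (left; ring1) | (right; ring1))

set_option maxHeartbeats 1000000 in
/-- `(X(z₁)×X(z₂)) × (X(z₂)×X(z₃)) = α(z₁,z₂,z₃) · X(z₂)`. -/
theorem stmt9 (x1 y1 x2 y2 x3 y3 : ℝ)
    (h1 : 0 < y1) (h2 : 0 < y2) (h3 : 0 < y3) :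
    matCross (matCross (Xz x1 y1) (Xz x2 y2)) (matCross (Xz x2 y2) (Xz x3 y3)) =
      alphaFn x1 y1 x2 y2 x3 y3 • Xz x2 y2 := by
  have n1 := h1.ne'
  have n2 := h2.ne'
  have n3 := h3.ne'
  rw [matCross_eq, coords_matCross, coords_matCross,
    coords_Xz x1 y1 n1, coords_Xz x2 y2 n2, coords_Xz x3 y3 n3]
  unfold hcross alphaFn Xz
  ext i j
  fin_cases i <;> fin_cases j <;>
    simp only [Matrix.smul_apply, Matrix.cons_val', Matrix.cons_val_zero, Matrix.cons_val_one,
      Matrix.head_cons, Matrix.empty_val', Matrix.cons_val_fin_one, Matrix.head_fin_const,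
      smul_eq_mul, Matrix.of_apply, Fin.zero_eta, Fin.mk_one] <;>
    (field_simp; first | ring1 | (left; ring1) | (right; ring1))
end

section
/- Let C and C' be vectors in a real quadratic space of signature (m−1,1) with (C,C) < 0, (C',C') < 0 and (C,C') < 0. Then for every x with (x,x) ≤ 0 and x ≠ 0, one has sgn(x,C) = sgn(x,C'); equivalently sgn(x,C) − sgn(x,C') = 0 for all nonpositive nonzero x, provided (x,C) ≠ 0 and (x,C') ≠ 0. -/
/-- The sign of a real number, as an integer. -/
noncomputable def sgnR (t : ℝ) : ℤ := if 0 < t then 1 else if t < 0 then -1 else 0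

/-- The standard bilinear form of signature `(m, 1)` on `ℝ^{m+1}`. -/
noncomputable def mink (m : ℕ) (u v : Fin (m + 1) → ℝ) : ℝ :=
  (∑ i : Fin m, u i.castSucc * v i.castSucc) - u (Fin.last m) * v (Fin.last m)

lemma mink_self (m : ℕ) (u : Fin (m + 1) → ℝ) :
    mink m u u = (∑ i : Fin m, (u i.castSucc) ^ 2) - (u (Fin.last m)) ^ 2 := by
  simp [mink, sq]

lemma key (m : ℕ) (u v : Fin (m + 1) → ℝ)
    (hu : ∑ i : Fin m, (u i.castSucc) ^ 2 ≤ (u (Fin.last m)) ^ 2)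
    (hv : ∑ i : Fin m, (v i.castSucc) ^ 2 < (v (Fin.last m)) ^ 2)
    (hs : u (Fin.last m) ≠ 0) :
    sgnR (mink m u v) = - sgnR (u (Fin.last m) * v (Fin.last m)) := by
  set S : ℝ := ∑ i : Fin m, u i.castSucc * v i.castSucc with hS
  set p : ℝ := u (Fin.last m) * v (Fin.last m) with hp
  have hCS : S ^ 2 ≤ (∑ i : Fin m, (u i.castSucc) ^ 2) * (∑ i : Fin m, (v i.castSucc) ^ 2) :=
    Finset.sum_mul_sq_le_sq_mul_sq Finset.univ _ _
  have hvnonneg : (0:ℝ) ≤ ∑ i : Fin m, (v i.castSucc) ^ 2 :=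
    Finset.sum_nonneg fun i _ => sq_nonneg _
  have hs2 : (0:ℝ) < (u (Fin.last m)) ^ 2 := by positivity
  have hSp : S ^ 2 < p ^ 2 := by
    calc S ^ 2 ≤ (∑ i : Fin m, (u i.castSucc) ^ 2) * (∑ i : Fin m, (v i.castSucc) ^ 2) := hCS
    _ ≤ (u (Fin.last m)) ^ 2 * (∑ i : Fin m, (v i.castSucc) ^ 2) :=
        mul_le_mul_of_nonneg_right hu hvnonneg
    _ < (u (Fin.last m)) ^ 2 * (v (Fin.last m)) ^ 2 := by
        exact mul_lt_mul_of_pos_left hv hs2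
    _ = p ^ 2 := by ring
  have hmink : mink m u v = S - p := rfl
  rcases lt_trichotomy p 0 with h | h | h
  · have h1 : 0 < S - p := by nlinarith
    have : sgnR (mink m u v) = 1 := by rw [hmink]; simp [sgnR, h1]
    rw [this]; simp [sgnR, h, not_lt.mpr h.le]
  · exfalso; rw [h] at hSp; nlinarith [sq_nonneg S]
  · have h1 : S - p < 0 := by nlinarith
    have : sgnR (mink m u v) = -1 := by
      rw [hmink]; simp [sgnR, h1, not_lt.mpr h1.le]
    rw [this]; simp [sgnR, h]

/-- In signature `(m−1,1)`: if `C, C'` are negative vectors in the same nap of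
the light cone (i.e. `(C,C') < 0`), then for every nonzero `x` with
`(x,x) ≤ 0`, `(x,C) ≠ 0` and `(x,C') ≠ 0`, one has `sgn(x,C) = sgn(x,C')`. -/
theorem stmt17 (m : ℕ) (C C' x : Fin (m + 1) → ℝ)
    (hC : mink m C C < 0) (hC' : mink m C' C' < 0) (hCC' : mink m C C' < 0)
    (hx0 : x ≠ 0) (hx : mink m x x ≤ 0)
    (hxC : mink m x C ≠ 0) (hxC' : mink m x C' ≠ 0) :
    sgnR (mink m x C) = sgnR (mink m x C') := by
  rw [mink_self] at hC hC' hx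
  have hCsum : ∑ i : Fin m, (C i.castSucc) ^ 2 < (C (Fin.last m)) ^ 2 := by linarith
  have hC'sum : ∑ i : Fin m, (C' i.castSucc) ^ 2 < (C' (Fin.last m)) ^ 2 := by linarith
  have hxsum : ∑ i : Fin m, (x i.castSucc) ^ 2 ≤ (x (Fin.last m)) ^ 2 := by linarith
  have hxlast : x (Fin.last m) ≠ 0 := by
    intro h
    apply hx0
    have h0 : ∑ i : Fin m, (x i.castSucc) ^ 2 = 0 := by
      have : (0:ℝ) ≤ ∑ i : Fin m, (x i.castSucc) ^ 2 :=
        Finset.sum_nonneg fun i _ => sq_nonneg _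
      nlinarith
    have hall : ∀ i ∈ (Finset.univ : Finset (Fin m)), (x i.castSucc) ^ 2 = 0 :=
      (Finset.sum_eq_zero_iff_of_nonneg (fun i _ => sq_nonneg _)).mp h0
    funext j
    refine Fin.lastCases h (fun i => ?_) j
    have := hall i (Finset.mem_univ i)
    exact pow_eq_zero_iff (n := 2) (by norm_num) |>.mp this
  have hClast : C (Fin.last m) ≠ 0 := by
    intro h; rw [h] at hCsum
    have : (0:ℝ) ≤ ∑ i : Fin m, (C i.castSucc) ^ 2 :=
      Finset.sum_nonneg fun i _ => sq_nonneg _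
    nlinarith
  -- from mink C C' < 0, via key : sgnR (mink C C') = - sgnR (C last * C' last)
  have hkCC' : sgnR (mink m C C') = - sgnR (C (Fin.last m) * C' (Fin.last m)) :=
    key m C C' hCsum.le hC'sum hClast
  have hCC'sgn : sgnR (mink m C C') = -1 := by
    simp [sgnR, hCC', not_lt.mpr hCC'.le]
  have hpos : 0 < C (Fin.last m) * C' (Fin.last m) := by
    by_contra hnp
    push_neg at hnp
    rcases lt_or_eq_of_le hnp with h | h
    · rw [hCC'sgn] at hkCC'
      simp [sgnR, h, not_lt.mpr h.le] at hkCC'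
    · rw [hCC'sgn] at hkCC'
      simp [sgnR, h.symm] at hkCC'
  have k1 := key m x C hxsum hCsum hxlast
  have k2 := key m x C' hxsum hC'sum hxlast
  rw [k1, k2]
  congr 1
  -- sgnR (s * tC) = sgnR (s * tC') given tC * tC' > 0
  set s := x (Fin.last m)
  set t := C (Fin.last m)
  set t' := C' (Fin.last m)
  rcases lt_trichotomy (s * t) 0 with h | h | h
  · have h' : s * t' < 0 := by nlinarith
    simp [sgnR, h, h', not_lt.mpr h.le, not_lt.mpr h'.le]
  · exfalso
    have : s = 0 ∨ t = 0 := mul_eq_zero.mp h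
    rcases this with h | h
    · exact hxlast h
    · exact hClast h
  · have h' : 0 < s * t' := by nlinarith
    simp [sgnR, h, h']
end
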